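/- arXiv:1107.1173 — 3 statements merged into one kernel-verified Lean document; each statement's English description precedes it below -/
import Mathlib

section
/- Let r ≥ 1, let c : ℤ^r × {1,...,r} → ℤ, and fix i ∈ {1,...,r}. Define p_i(v) = (-1)^r · ∑_{J ⊆ {1,...,r}, i ∈ J} (-1)^{|J|} · c(v + 1 - 1_J, i). Suppose that for every v, c(v) := ∑_{j=0}^{r-1} c(v + 1_{{i_1,...,i_j}}, i_{j+1}) for every ordering (i_1,...,i_r) of {1,...,r} (additivity along flags). Then the Poincaré coefficient p'(v) = (-1)^r ∑_{J ⊆ I} (-1)^{|J|} c(v - 1_J) satisfies p'(v) = -p_i(v) + p_i(v - 1), where 1 = (1,...,1). -/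
/-- Indicator vector of a subset `J ⊆ {1,…,r}`. -/
def indVec {r : ℕ} (J : Finset (Fin r)) : Fin r → ℤ := fun i => if i ∈ J then 1 else 0

/-!
Fix an ordering of the coordinates that ends with `i`. The flag decomposition of `cTot w` along
it and that of `cTot (w - 1_{i})` along the same ordering with `i` moved to the front share all
terms but one, so `cTot w - cTot (w - 1_{i}) = c (w + 1 - 1_{i}) i - c (w - 1_{i}) i`. Summing
this with signs over the subsets `K ∌ i`, each paired with `K ∪ {i}`, gives the theorem.
-/

open Finset

lemma Finset.sum_filter_mem_powerset_insert {α M : Type*} [DecidableEq α] [AddCommMonoid M]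
    {s : Finset α} {a : α} (ha : a ∉ s) (f : Finset α → M) :
    ∑ t ∈ (insert a s).powerset with a ∈ t, f t = ∑ t ∈ s.powerset, f (insert a t) := by
  rw [sum_filter, sum_powerset_insert ha]
  have hs : ∀ t ∈ s.powerset, a ∉ t := fun t ht => notMem_mono (mem_powerset.mp ht) ha
  simp +contextual [hs]

section IndVec

variable {r : ℕ}

@[simp]
lemma indVec_empty : indVec (∅ : Finset (Fin r)) = 0 := by
  ext; simp [indVec]

@[simp]
lemma indVec_univ : indVec (univ : Finset (Fin r)) = 1 := by
  ext; simp [indVec]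

lemma indVec_insert {a : Fin r} {s : Finset (Fin r)} (ha : a ∉ s) :
    indVec (insert a s) = indVec s + indVec {a} := by
  ext x
  by_cases hx : x = a
  · subst hx; simp [indVec, ha]
  · simp [indVec, hx]

lemma indVec_univ_erase (a : Fin r) : indVec (univ.erase a) = 1 - indVec {a} := by
  rw [eq_sub_iff_add_eq, ← indVec_insert (notMem_erase a univ), insert_erase (mem_univ a),
    indVec_univ]

end IndVec

/-- `flag σ j = {σ 0, …, σ (j - 1)}`, the paper's `{i_1, …, i_j}` for `i_k = σ (k - 1)`. -/
def flag {r : ℕ} (σ : Equiv.Perm (Fin r)) (j : Fin r) : Finset (Fin r) :=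
  (univ.filter (· < j)).image σ

def IsFlagAdditive {r : ℕ} {M : Type*} [AddCommMonoid M] (c : (Fin r → ℤ) → Fin r → M)
    (cTot : (Fin r → ℤ) → M) : Prop :=
  ∀ (v : Fin r → ℤ) (σ : Equiv.Perm (Fin r)), cTot v = ∑ j, c (v + indVec (flag σ j)) (σ j)

section Flag

variable {r : ℕ} (σ : Equiv.Perm (Fin r))

lemma mem_flag {x j : Fin r} : x ∈ flag σ j ↔ σ⁻¹ x < j := by
  simp only [flag, mem_image, mem_filter, mem_univ, true_and]
  exact ⟨fun ⟨k, hk, hx⟩ => by simpa [← hx] using hk, fun h => ⟨σ⁻¹ x, h, by simp⟩⟩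

lemma apply_notMem_flag {j k : Fin r} (h : k ≤ j) : σ j ∉ flag σ k := by
  simpa [mem_flag] using h

end Flag

section FlagSucc

variable {n : ℕ} (σ : Equiv.Perm (Fin (n + 1)))

@[simp]
lemma flag_zero : flag σ 0 = ∅ := by
  ext; simp [mem_flag]

lemma flag_last : flag σ (Fin.last n) = univ.erase (σ (Fin.last n)) := by
  ext x
  simp [mem_flag, Fin.lt_last_iff_ne_last, Equiv.symm_apply_eq]

lemma flag_rotate_succ (k : Fin n) :
    flag (σ * (finRotate (n + 1))⁻¹) k.succ = insert (σ (Fin.last n)) (flag σ k.castSucc) := by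
  ext x
  obtain ⟨y, rfl⟩ := σ.surjective x
  simp only [mem_flag, mem_insert, mul_inv_rev, inv_inv, Equiv.Perm.mul_apply,
    σ.injective.eq_iff]
  induction y using Fin.lastCases with
  | last => simp
  | cast m => simp [Fin.castSucc_ne_last]

end FlagSucc

lemma IsFlagAdditive.cTot_sub_cTot_sub_single {n : ℕ} {M : Type*} [AddCommGroup M]
    {c : (Fin (n + 1) → ℤ) → Fin (n + 1) → M} {cTot : (Fin (n + 1) → ℤ) → M}
    (h : IsFlagAdditive c cTot) (i : Fin (n + 1)) (w : Fin (n + 1) → ℤ) :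
    cTot w - cTot (w - indVec {i}) = c (w + indVec (univ.erase i)) i - c (w - indVec {i}) i := by
  set σ := Equiv.swap (Fin.last n) i
  have hσ : σ (Fin.last n) = i := Equiv.swap_apply_left _ _
  have hrot_zero : (finRotate (n + 1))⁻¹ 0 = Fin.last n := by
    rw [Equiv.Perm.inv_eq_iff_eq, finRotate_last]
  have hrot_succ (k : Fin n) : (finRotate (n + 1))⁻¹ k.succ = k.castSucc := by
    rw [Equiv.Perm.inv_eq_iff_eq]; simp
  have hshift (k : Fin n) :
      w - indVec {i} + indVec (insert i (flag σ k.castSucc)) = w + indVec (flag σ k.castSucc) := by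
    rw [← hσ, indVec_insert (apply_notMem_flag σ (Fin.le_last _))]
    abel
  have hi_last := h w σ
  rw [Fin.sum_univ_castSucc, flag_last, hσ] at hi_last
  -- `σ * (finRotate _)⁻¹` is the ordering `σ` with its last entry `i` moved to the front.
  have hi_first := h (w - indVec {i}) (σ * (finRotate (n + 1))⁻¹)
  simp only [Fin.sum_univ_succ, Equiv.Perm.mul_apply, hrot_zero, hrot_succ, flag_zero,
    indVec_empty, add_zero, flag_rotate_succ, hσ, hshift] at hi_first
  rw [hi_last, hi_first]
  abel

lemma IsFlagAdditive.cTot_sub_cTot_insert {n : ℕ} {M : Type*} [AddCommGroup M]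
    {c : (Fin (n + 1) → ℤ) → Fin (n + 1) → M} {cTot : (Fin (n + 1) → ℤ) → M}
    (h : IsFlagAdditive c cTot) {i : Fin (n + 1)} {K : Finset (Fin (n + 1))} (hiK : i ∉ K)
    (v : Fin (n + 1) → ℤ) :
    cTot (v - indVec K) - cTot (v - indVec (insert i K)) =
      c (v + 1 - indVec (insert i K)) i - c (v - indVec (insert i K)) i := by
  have hsingle : v - indVec (insert i K) = v - indVec K - indVec {i} := by
    rw [indVec_insert hiK]; abel
  have hcompl : v + 1 - indVec (insert i K) = v - indVec K + indVec (univ.erase i) := by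
    rw [indVec_insert hiK, indVec_univ_erase]; abel
  rw [hsingle, hcompl]
  exact h.cTot_sub_cTot_sub_single i (v - indVec K)

theorem pprime_eq_neg_pi_add_pi_shift_general (r : ℕ)
    (c : (Fin r → ℤ) → Fin r → ℤ) (cTot : (Fin r → ℤ) → ℤ) (i : Fin r)
    (hflag : ∀ (v : Fin r → ℤ) (σ : Equiv.Perm (Fin r)),
      cTot v = ∑ j : Fin r,
        c (v + indVec ((Finset.univ.filter (fun k : Fin r => k < j)).image σ)) (σ j))
    (v : Fin r → ℤ) :
    (-1 : ℤ) ^ r *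
        ∑ J ∈ (Finset.univ : Finset (Fin r)).powerset,
          (-1 : ℤ) ^ J.card * cTot (v - indVec J)
      = -((-1 : ℤ) ^ r *
            ∑ J ∈ ((Finset.univ : Finset (Fin r)).powerset).filter (fun J => i ∈ J),
              (-1 : ℤ) ^ J.card * c (v + 1 - indVec J) i)
        + ((-1 : ℤ) ^ r *
            ∑ J ∈ ((Finset.univ : Finset (Fin r)).powerset).filter (fun J => i ∈ J),
              (-1 : ℤ) ^ J.card * c ((v - 1) + 1 - indVec J) i) := by
  obtain ⟨n, rfl⟩ : ∃ n, r = n + 1 := Nat.exists_eq_add_one.mpr i.pos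
  have hadd : IsFlagAdditive c cTot := hflag
  have hi : i ∉ univ.erase i := notMem_erase i univ
  rw [← insert_erase (mem_univ i), sum_powerset_insert hi, sum_filter_mem_powerset_insert hi,
    sum_filter_mem_powerset_insert hi, ← sum_add_distrib, neg_add_eq_sub, ← mul_sub,
    ← sum_sub_distrib]
  congr 1
  refine sum_congr rfl fun K hK => ?_
  have hiK : i ∉ K := notMem_mono (mem_powerset.mp hK) hi
  rw [card_insert_of_notMem hiK, pow_succ, sub_add_cancel]
  linear_combination (-1 : ℤ) ^ K.card * hadd.cTot_sub_cTot_insert hiK v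

/-- Abstract version of `(t_1⋯t_r - 1)·P_i(t) = P'(t)`: if `c (v, i)` satisfies the flag
additivity `c(v) = ∑_{j=0}^{r-1} c(v + 1_{{i_1,…,i_j}}, i_{j+1})` for every ordering
`(i_1,…,i_r)` of `{1,…,r}`, then the coefficients
`p'(v) = (-1)^r ∑_{J ⊆ I} (-1)^{|J|} c(v - 1_J)` and
`p_i(v) = (-1)^r ∑_{J ∋ i} (-1)^{|J|} c(v + 1 - 1_J, i)` satisfy
`p'(v) = -p_i(v) + p_i(v - 1)`. -/
theorem pprime_eq_neg_pi_add_pi_shift (r : ℕ) (hr : 1 ≤ r)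
    (c : (Fin r → ℤ) → Fin r → ℤ) (cTot : (Fin r → ℤ) → ℤ) (i : Fin r)
    (hflag : ∀ (v : Fin r → ℤ) (σ : Equiv.Perm (Fin r)),
      cTot v = ∑ j : Fin r,
        c (v + indVec ((Finset.univ.filter (fun k : Fin r => k < j)).image σ)) (σ j))
    (v : Fin r → ℤ) :
    (-1 : ℤ) ^ r *
        ∑ J ∈ (Finset.univ : Finset (Fin r)).powerset,
          (-1 : ℤ) ^ J.card * cTot (v - indVec J)
      = -((-1 : ℤ) ^ r *
            ∑ J ∈ ((Finset.univ : Finset (Fin r)).powerset).filter (fun J => i ∈ J),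
              (-1 : ℤ) ^ J.card * c (v + 1 - indVec J) i)
        + ((-1 : ℤ) ^ r *
            ∑ J ∈ ((Finset.univ : Finset (Fin r)).powerset).filter (fun J => i ∈ J),
              (-1 : ℤ) ^ J.card * c ((v - 1) + 1 - indVec J) i) :=
  pprime_eq_neg_pi_add_pi_shift_general r c cTot i hflag v
end

section
/- Let r ≥ 1 and let c : ℤ^r → ℤ satisfy the Gorenstein symmetry c(v) + c(δ - v - 1) = r for all v ∈ ℤ^r, where δ ∈ ℤ^r is fixed and 1 = (1,...,1). Then the coefficients p'(v) = (-1)^r ∑_{J ⊆ {1,...,r}} (-1)^{|J|} c(v - 1_J) satisfy p'(v) = (-1)^{r+1} · p'(δ - v), i.e., the functional equation P'(t) + (-1)^r t^δ P'(t^{-1}) = 0 holds coefficientwise. -/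
open Finset

theorem indVec_compl {r : ℕ} (J : Finset (Fin r)) : indVec Jᶜ = 1 - indVec J := by
  funext i
  by_cases hi : i ∈ J <;> simp [indVec, hi]

theorem sub_sub_indVec_sub_one {r : ℕ} (δ v : Fin r → ℤ) (J : Finset (Fin r)) :
    δ - (v - indVec J) - 1 = δ - v - indVec Jᶜ := by
  rw [indVec_compl]
  abel

section AlternatingSums

variable {ι R : Type*} [Fintype ι] [CommRing R]

theorem neg_one_pow_card_compl [DecidableEq ι] (J : Finset ι) :
    (-1 : R) ^ #Jᶜ = (-1) ^ Fintype.card ι * (-1) ^ #J := by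
  rw [← card_add_card_compl J, pow_add, mul_right_comm, ← pow_add, ← two_mul, pow_mul,
    neg_one_sq, one_pow, one_mul]

theorem sum_neg_one_pow_card_mul_compl [DecidableEq ι] (f : Finset ι → R) :
    ∑ J : Finset ι, (-1) ^ #J * f Jᶜ = (-1) ^ Fintype.card ι * ∑ J : Finset ι, (-1) ^ #J * f J :=
  calc ∑ J : Finset ι, (-1) ^ #J * f Jᶜ = ∑ J : Finset ι, (-1) ^ #Jᶜ * f J :=
        Fintype.sum_equiv compl_involutive.toPerm _ _ fun J => by simp
    _ = _ := by simp only [neg_one_pow_card_compl, mul_sum, mul_assoc]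

theorem card_mul_sum_neg_one_pow_card :
    (Fintype.card ι : R) * ∑ J : Finset ι, (-1) ^ #J = 0 := by
  rcases isEmpty_or_nonempty ι with hι | hι
  · simp [Fintype.card_eq_zero]
  · have hzero : ∑ J : Finset ι, (-1 : ℤ) ^ #J = 0 := by
      simpa only [powerset_univ] using sum_powerset_neg_one_pow_card_of_nonempty univ_nonempty
    have hcast := congrArg (Int.cast : ℤ → R) hzero
    push_cast at hcast
    rw [hcast, mul_zero]

end AlternatingSums

theorem sum_neg_one_pow_card_mul_sub_indVec {R : Type*} [CommRing R] {r : ℕ}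
    {c : (Fin r → ℤ) → R} {δ : Fin r → ℤ} (hsym : ∀ v, c v + c (δ - v - 1) = r)
    (v : Fin r → ℤ) :
    ∑ J : Finset (Fin r), (-1) ^ #J * c (v - indVec J)
      = -((-1) ^ r * ∑ J : Finset (Fin r), (-1) ^ #J * c (δ - v - indVec J)) := by
  have hcompl (J : Finset (Fin r)) : c (v - indVec J) = r - c (δ - v - indVec Jᶜ) := by
    rw [← hsym (v - indVec J), sub_sub_indVec_sub_one, add_sub_cancel_right]
  have hconst : (r : R) * ∑ J : Finset (Fin r), (-1) ^ #J = 0 := by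
    simpa only [Fintype.card_fin] using card_mul_sum_neg_one_pow_card (ι := Fin r) (R := R)
  calc ∑ J : Finset (Fin r), (-1) ^ #J * c (v - indVec J)
      = (r : R) * ∑ J : Finset (Fin r), (-1) ^ #J
          - ∑ J : Finset (Fin r), (-1) ^ #J * c (δ - v - indVec Jᶜ) := by
        rw [mul_sum]
        simp only [hcompl, mul_sub, sum_sub_distrib, mul_comm (r : R)]
    _ = _ := by
        rw [hconst, sum_neg_one_pow_card_mul_compl (fun J => c (δ - v - indVec J)),
          Fintype.card_fin, zero_sub]

theorem functional_equation_of_gorenstein_symmetry_general (r : ℕ)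
    (c : (Fin r → ℤ) → ℤ) (δ : Fin r → ℤ)
    (hsym : ∀ v : Fin r → ℤ, c v + c (δ - v - 1) = (r : ℤ))
    (v : Fin r → ℤ) :
    (-1 : ℤ) ^ r *
        ∑ J ∈ (Finset.univ : Finset (Fin r)).powerset,
          (-1 : ℤ) ^ J.card * c (v - indVec J)
      = (-1 : ℤ) ^ (r + 1) *
          ((-1 : ℤ) ^ r *
            ∑ J ∈ (Finset.univ : Finset (Fin r)).powerset,
              (-1 : ℤ) ^ J.card * c ((δ - v) - indVec J)) := by
  rw [powerset_univ, sum_neg_one_pow_card_mul_sub_indVec hsym]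
  ring

/-- Combinatorial core of the Campillo–Delgado–Kiyek functional equation: if
`c(v) + c(δ - v - 1) = r` for all `v` (Gorenstein symmetry), then the coefficients
`p'(v) = (-1)^r ∑_{J ⊆ I} (-1)^{|J|} c(v - 1_J)` satisfy `p'(v) = (-1)^{r+1} p'(δ - v)`. -/
theorem functional_equation_of_gorenstein_symmetry (r : ℕ) (hr : 1 ≤ r)
    (c : (Fin r → ℤ) → ℤ) (δ : Fin r → ℤ)
    (hsym : ∀ v : Fin r → ℤ, c v + c (δ - v - 1) = (r : ℤ))
    (v : Fin r → ℤ) :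
    (-1 : ℤ) ^ r *
        ∑ J ∈ (Finset.univ : Finset (Fin r)).powerset,
          (-1 : ℤ) ^ J.card * c (v - indVec J)
      = (-1 : ℤ) ^ (r + 1) *
          ((-1 : ℤ) ^ r *
            ∑ J ∈ (Finset.univ : Finset (Fin r)).powerset,
              (-1 : ℤ) ^ J.card * c ((δ - v) - indVec J)) :=
  functional_equation_of_gorenstein_symmetry_general r c δ hsym v
end

section
/- Let r ≥ 1 and let p : ℤ^r → ℤ have finite support and satisfy p(v) = (-1)^{r+1} p(δ - v) for all v (the functional equation of P'). Define p on ℤ^r via P(t) = P'(t)/(t_1⋯t_r - 1) formally; equivalently, let q : ℤ^r → ℤ satisfy p(v) = -q(v) + q(v - 1) with q of finite support. Then q(v) = (-1)^r q(τ - v) for all v, where τ = δ - 1. -/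
/-!
Put `c = (-1)^r` and `h(v) = q(v) - c·q(τ - v)`. The relation `p(v) = q(v - 1) - q(v)` together
with the functional equation of `p` makes `h` invariant under translation by `(1, …, 1)`.
Since `h` has finite support and `(1, …, 1)` has infinite order, `h = 0`.
-/

open Function

theorem Function.Periodic.eq_zero_of_support_finite {G M : Type*} [AddLeftCancelMonoid G]
    [Zero M] {f : G → M} {a : G} (hf : Periodic f a) (ha : ¬IsOfFinAddOrder a)
    (hfin : (support f).Finite) : f = 0 := by
  funext v
  by_contra hv
  have horbit : Injective fun n : ℕ => v + n • a :=
    (add_right_injective v).comp (injective_nsmul_iff_not_isOfFinAddOrder.mpr ha)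
  refine Set.infinite_range_of_injective horbit (hfin.subset ?_)
  rintro _ ⟨n, rfl⟩
  simpa [mem_support, hf.nsmul n v] using hv

theorem Pi.not_isOfFinAddOrder_one {ι R : Type*} [Nonempty ι] [Ring R] [Nontrivial R]
    [IsAddTorsionFree R] : ¬IsOfFinAddOrder (1 : ι → R) :=
  not_isOfFinAddOrder_of_isAddTorsionFree one_ne_zero

section SymmDefect

variable {G R : Type*} [AddCommGroup G] [CommRing R]

def symmDefect (c : R) (τ : G) (q : G → R) : G → R := fun v => q v - c * q (τ - v)

theorem symmDefect_eq_zero_iff {c : R} {τ : G} {q : G → R} :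
    symmDefect c τ q = 0 ↔ ∀ v, q v = c * q (τ - v) := by
  simp only [funext_iff, symmDefect, Pi.zero_apply, sub_eq_zero]

theorem support_symmDefect_finite {q : G → R} (hq : (support q).Finite) (c : R) (τ : G) :
    (support (symmDefect c τ q)).Finite := by
  refine (hq.union (hq.preimage (sub_right_injective (b := τ)).injOn)).subset ?_
  refine (support_sub _ _).trans (Set.union_subset_union_right _ ?_)
  exact (support_mul_subset_right _ _).trans (support_comp_eq_preimage q (τ - ·)).subset

theorem symmDefect_periodic {c : R} {δ e : G} {p q : G → R}
    (hpq : ∀ v, p v = -q v + q (v - e)) (hp : ∀ v, p v = -c * p (δ - v)) :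
    Periodic (symmDefect c (δ - e) q) e := by
  intro v
  have h₁ : p (v + e) = -q (v + e) + q v := by simpa using hpq (v + e)
  have h₂ : p (δ - e - v) = -q (δ - e - v) + q (δ - e - (v + e)) := by
    rw [hpq, show δ - e - v - e = δ - e - (v + e) by abel]
  have h₃ : p (v + e) = -c * p (δ - e - v) := by
    rw [hp, show δ - (v + e) = δ - e - v by abel]
  simp only [symmDefect]
  linear_combination h₁ - h₃ + c * h₂

end SymmDefect

theorem functional_equation_of_P_general (r : ℕ) (hr : 1 ≤ r) (δ : Fin r → ℤ)
    (p q : (Fin r → ℤ) → ℤ)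
    (hqfin : (Function.support q).Finite)
    (hfe : ∀ v : Fin r → ℤ, p v = (-1 : ℤ) ^ (r + 1) * p (δ - v))
    (hpq : ∀ v : Fin r → ℤ, p v = -q v + q (v - 1)) :
    ∀ v : Fin r → ℤ, q v = (-1 : ℤ) ^ r * q ((δ - 1) - v) := by
  have : Nonempty (Fin r) := ⟨⟨0, hr⟩⟩
  have hp : ∀ v, p v = -(-1) ^ r * p (δ - v) := fun v => by rw [hfe, pow_succ]; ring
  refine symmDefect_eq_zero_iff.mp ?_
  exact (symmDefect_periodic hpq hp).eq_zero_of_support_finite Pi.not_isOfFinAddOrder_one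
    (support_symmDefect_finite hqfin _ _)

/-- From the functional equation of `P'` to the functional equation of `P`: if
`p, q : ℤ^r → ℤ` have finite support, `p(v) = (-1)^{r+1} p(δ - v)` for all `v`, and
`p(v) = -q(v) + q(v - 1)` (i.e. `(t₁⋯t_r - 1)·Q = P'` coefficientwise), then
`q(v) = (-1)^r q(τ - v)` for all `v`, where `τ = δ - 1`. -/
theorem functional_equation_of_P (r : ℕ) (hr : 1 ≤ r) (δ : Fin r → ℤ)
    (p q : (Fin r → ℤ) → ℤ)
    (hpfin : (Function.support p).Finite)
    (hqfin : (Function.support q).Finite)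
    (hfe : ∀ v : Fin r → ℤ, p v = (-1 : ℤ) ^ (r + 1) * p (δ - v))
    (hpq : ∀ v : Fin r → ℤ, p v = -q v + q (v - 1)) :
    ∀ v : Fin r → ℤ, q v = (-1 : ℤ) ^ r * q ((δ - 1) - v) :=
  functional_equation_of_P_general r hr δ p q hqfin hfe hpq
end
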